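/- (Theorem 4(d).) Under the hypotheses of Theorem 2 (closed-loop unicycle dynamics with the range-only controller ω = v/d + v·k₁·Ω(β) + v·k₂·((r − d)/r)·η(r − d), auxiliary state ż = −κ·z + (1/2)·r², β = −κ·z + (1/2)·r², v ≠ 0 constant, k₁, k₂, κ > 0, r(0) ∈ (r_i, r_o)), let α₁ : [0, ∞) → [0, ∞) be a strictly increasing continuous function with α₁(0) = 0 and α₁(|s|) ≤ ∫₀ˢ Ω(τ) dτ for all s ∈ ℝ, and let B ≥ 0 satisfy α₁(B) ≥ V₂(0)/(d·k₁), where V₂(0) = (1/2)(ē_x(0)² + ē_y(0)²) + d·k₂·V_r(r(0) − d) + d·k₁·∫₀^{β(0)} Ω(τ) dτ. Set Υ₂ = √(1 − exp(−2·V₂(0)/(d·k₂))). Then for all t ≥ 0: (1/κ)·((1/2)·(r_i + δ_a·(1 − Υ₂))² − B) ≤ |z(t)| ≤ (1/κ)·((1/2)·(r_o − δ_b·(1 − Υ₂))² + B). -/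

import Mathlib

/-- Range r(t) = √((x(t) − x_T)² + (y(t) − y_T)²). -/
noncomputable def rng (x y : ℝ → ℝ) (xT yT : ℝ) (t : ℝ) : ℝ :=
  Real.sqrt ((x t - xT) ^ 2 + (y t - yT) ^ 2)

/-- Transformed error ē_x(t) = (x(t) − x_T)·cos θ(t) + (y(t) − y_T)·sin θ(t). -/
noncomputable def ebx (x y θ : ℝ → ℝ) (xT yT : ℝ) (t : ℝ) : ℝ :=
  (x t - xT) * Real.cos (θ t) + (y t - yT) * Real.sin (θ t)

/-- Transformed error ē_y(t) = −(x(t) − x_T)·sin θ(t) + (y(t) − y_T)·cos θ(t) + d. -/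
noncomputable def eby (x y θ : ℝ → ℝ) (xT yT d : ℝ) (t : ℝ) : ℝ :=
  -(x t - xT) * Real.sin (θ t) + (y t - yT) * Real.cos (θ t) + d

/-- The asymmetric barrier Lyapunov function V_r. -/
noncomputable def Vr (δa δb e : ℝ) : ℝ :=
  if 0 < e then (1 / 2) * Real.log (δb ^ 2 / (δb ^ 2 - e ^ 2))
  else (1 / 2) * Real.log (δa ^ 2 / (δa ^ 2 - e ^ 2))

/-- η(e) = 1/(δ_b² − e²) for e > 0 and η(e) = 1/(δ_a² − e²) for e ≤ 0. -/
noncomputable def eta (δa δb e : ℝ) : ℝ :=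
  if 0 < e then 1 / (δb ^ 2 - e ^ 2) else 1 / (δa ^ 2 - e ^ 2)

/-- The estimation signal β(t) = −κ·z(t) + (1/2)·r(t)². -/
noncomputable def beta (x y : ℝ → ℝ) (z : ℝ → ℝ) (κ xT yT : ℝ) (t : ℝ) : ℝ :=
  -κ * z t + (1 / 2) * (rng x y xT yT t) ^ 2

/-!
Along the closed loop the Lyapunov function
V₂ = ½(ē_x² + ē_y²) + d k₂ V_r(r − d) + d k₁ ∫₀^β Ω
has derivative −d k₁ κ β Ω(β) ≤ 0 as long as r stays in (r_i, r_o): the k₁- and k₂-terms of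
the controller cancel the cross terms produced by the other two summands. All three summands
are nonnegative, so V₂ ≤ V₂(0) confines r − d to a sublevel set of the barrier V_r, i.e. to the
closed band [r_i + δ_a(1 − Υ₂), r_o − δ_b(1 − Υ₂)] strictly inside (r_i, r_o), and bounds |β|
by B through α₁. By continuous induction r never leaves the band, and κz = ½r² − β then
bounds |z|.
-/

open Real Set Filter Topology

theorem ContinuousOn.Icc_subset_preimage_of_trapped {α : Type*} [TopologicalSpace α]
    {r : ℝ → α} {C U : Set α} {a b : ℝ} (hr : ContinuousOn r (Icc a b)) (hC : IsClosed C)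
    (hU : IsOpen U) (hCU : C ⊆ U) (ha : r a ∈ U)
    (htrap : ∀ u ∈ Icc a b, (∀ w ∈ Icc a u, r w ∈ U) → r u ∈ C) :
    Icc a b ⊆ r ⁻¹' C := by
  rcases lt_or_ge b a with hba | hab
  · simp [Icc_eq_empty_of_lt hba]
  replace ha : r a ∈ C := htrap a (left_mem_Icc.2 hab) fun w hw => by
    rwa [le_antisymm hw.2 hw.1]
  refine (inter_comm _ (Icc a b) ▸ hr.preimage_isClosed_of_isClosed isClosed_Icc hC)
    |>.Icc_subset_of_forall_mem_nhdsGT_of_Icc_subset ha fun t ht hprefix => ?_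
  have hU_near : r ⁻¹' U ∈ 𝓝[>] t := by
    rw [← nhdsWithin_Ioc_eq_nhdsGT ht.2]
    exact nhdsWithin_mono _ (Ioc_subset_Icc_self.trans (Icc_subset_Icc_left ht.1))
      (hr t (Ico_subset_Icc_self ht) (hU.mem_nhds (hCU (hprefix ⟨ht.1, le_rfl⟩))))
  obtain ⟨ε, hε, hεU⟩ := mem_nhdsGT_iff_exists_Ioo_subset.1 hU_near
  filter_upwards [Ioo_mem_nhdsGT hε, Ioc_mem_nhdsGT ht.2] with u hu hub
  refine htrap u ⟨ht.1.trans hu.1.le, hub.2⟩ fun w hw => ?_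
  rcases le_or_gt w t with hwt | htw
  · exact hCU (hprefix ⟨hw.1, hwt⟩)
  · exact hεU ⟨htw, hw.2.trans_lt hu.2⟩

theorem sqrt_one_sub_exp_lt_one (a : ℝ) : √(1 - exp a) < 1 := by
  rw [sqrt_lt' one_pos]
  linarith [exp_pos a]

noncomputable def logBarrier (δ e : ℝ) : ℝ :=
  1 / 2 * log (δ ^ 2 / (δ ^ 2 - e ^ 2))

theorem logBarrier_zero {δ : ℝ} (hδ : δ ≠ 0) : logBarrier δ 0 = 0 := by
  simp [logBarrier, hδ]

theorem logBarrier_nonneg {δ e : ℝ} (he : e ^ 2 < δ ^ 2) : 0 ≤ logBarrier δ e := by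
  have hpos : 0 < δ ^ 2 - e ^ 2 := by linarith
  have : 1 ≤ δ ^ 2 / (δ ^ 2 - e ^ 2) := by
    rw [le_div_iff₀ hpos]
    linarith [sq_nonneg e]
  unfold logBarrier
  linarith [log_nonneg this]

theorem hasDerivAt_logBarrier {δ e : ℝ} (hδ : δ ≠ 0) (he : e ^ 2 < δ ^ 2) :
    HasDerivAt (logBarrier δ) (e * (1 / (δ ^ 2 - e ^ 2))) e := by
  have hpos : 0 < δ ^ 2 - e ^ 2 := by linarith
  have hq : HasDerivAt (fun s => δ ^ 2 / (δ ^ 2 - s ^ 2)) _ e :=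
    (hasDerivAt_const e (δ ^ 2)).div ((hasDerivAt_pow 2 e).const_sub (δ ^ 2)) hpos.ne'
  refine ((hq.log (div_ne_zero (pow_ne_zero 2 hδ) hpos.ne')).const_mul (1 / 2 : ℝ)).congr_deriv
    ?_
  field_simp
  ring

theorem abs_le_of_logBarrier_le {δ e c : ℝ} (hδ : 0 < δ) (he : e ^ 2 < δ ^ 2)
    (hc : logBarrier δ e ≤ c) : |e| ≤ δ * √(1 - exp (-(2 * c))) := by
  have hpos : 0 < δ ^ 2 - e ^ 2 := by linarith
  have hratio : δ ^ 2 / (δ ^ 2 - e ^ 2) ≤ exp (2 * c) := by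
    rw [← log_le_iff_le_exp (by positivity)]
    unfold logBarrier at hc
    linarith
  have hsq : e ^ 2 ≤ δ ^ 2 * (1 - exp (-(2 * c))) := by
    rw [div_le_iff₀ hpos] at hratio
    have := mul_le_mul_of_nonneg_left hratio (exp_pos (-(2 * c))).le
    rw [← mul_assoc, ← exp_add, neg_add_cancel, exp_zero, one_mul] at this
    nlinarith [exp_pos (-(2 * c))]
  calc |e| ≤ √(δ ^ 2 * (1 - exp (-(2 * c)))) := abs_le_sqrt hsq
    _ = δ * √(1 - exp (-(2 * c))) := by rw [sqrt_mul (sq_nonneg δ), sqrt_sq hδ.le]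

theorem Vr_eq_ite (δa δb e : ℝ) :
    Vr δa δb e = if 0 < e then logBarrier δb e else logBarrier δa e := rfl

section Barrier

variable {δa δb e : ℝ}

theorem Vr_nonneg (h₁ : -δa < e) (h₂ : e < δb) : 0 ≤ Vr δa δb e := by
  rw [Vr_eq_ite]
  split_ifs with he
  · exact logBarrier_nonneg (by nlinarith)
  · exact logBarrier_nonneg (by nlinarith)

theorem mem_Icc_of_Vr_le {c : ℝ} (ha : 0 < δa) (hb : 0 < δb) (h₁ : -δa < e) (h₂ : e < δb)
    (hc : Vr δa δb e ≤ c) :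
    e ∈ Icc (-(δa * √(1 - exp (-(2 * c))))) (δb * √(1 - exp (-(2 * c)))) := by
  rw [Vr_eq_ite] at hc
  have hΥ : 0 ≤ √(1 - exp (-(2 * c))) := sqrt_nonneg _
  split_ifs at hc with he
  · have := abs_le_of_logBarrier_le hb (by nlinarith) hc
    constructor <;> nlinarith [le_abs_self e]
  · have := abs_le_of_logBarrier_le ha (by nlinarith) hc
    constructor <;> nlinarith [neg_abs_le e]

theorem hasDerivAt_Vr_zero (ha : 0 < δa) (hb : 0 < δb) : HasDerivAt (Vr δa δb) 0 0 := by
  have hflat {δ : ℝ} (hδ : 0 < δ) : HasDerivAt (logBarrier δ) 0 0 := by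
    simpa using hasDerivAt_logBarrier (e := 0) hδ.ne' (by simpa using pow_pos hδ 2)
  have hleft : HasDerivWithinAt (Vr δa δb) 0 (Iic 0) 0 :=
    (hflat ha).hasDerivWithinAt.congr (fun s hs => by simp [Vr_eq_ite, not_lt.2 (mem_Iic.1 hs)])
      (by simp [Vr_eq_ite])
  have hright : HasDerivWithinAt (Vr δa δb) 0 (Ici 0) 0 := by
    refine (hflat hb).hasDerivWithinAt.congr (fun s hs => ?_) ?_
    · rcases (mem_Ici.1 hs).eq_or_lt with rfl | hs
      · simp [Vr_eq_ite, logBarrier_zero ha.ne', logBarrier_zero hb.ne']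
      · simp [Vr_eq_ite, hs]
    · simp [Vr_eq_ite, logBarrier_zero ha.ne', logBarrier_zero hb.ne']
  simpa [Iic_union_Ici] using hleft.union hright

theorem hasDerivAt_Vr (ha : 0 < δa) (hb : 0 < δb) (h₁ : -δa < e) (h₂ : e < δb) :
    HasDerivAt (Vr δa δb) (e * eta δa δb e) e := by
  rcases lt_trichotomy e 0 with he | rfl | he
  · have hloc : Vr δa δb =ᶠ[𝓝 e] logBarrier δa := by
      filter_upwards [Iio_mem_nhds he] with s hs
      simp [Vr_eq_ite, not_lt.2 (mem_Iio.1 hs).le]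
    simpa [eta, not_lt.2 he.le] using
      (hasDerivAt_logBarrier ha.ne' (by nlinarith)).congr_of_eventuallyEq hloc
  · simpa using hasDerivAt_Vr_zero ha hb
  · have hloc : Vr δa δb =ᶠ[𝓝 e] logBarrier δb := by
      filter_upwards [Ioi_mem_nhds he] with s hs
      simp [Vr_eq_ite, mem_Ioi.1 hs]
    simpa [eta, he] using (hasDerivAt_logBarrier hb.ne' (by nlinarith)).congr_of_eventuallyEq hloc

end Barrier

section Kinematics

variable {x y θ z : ℝ → ℝ} {v ω κ d xT yT t : ℝ}

theorem hasDerivAt_ebx (hx : HasDerivAt x (v * cos (θ t)) t) (hy : HasDerivAt y (v * sin (θ t)) t)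
    (hθ : HasDerivAt θ ω t) :
    HasDerivAt (ebx x y θ xT yT) (v + ω * (eby x y θ xT yT d t - d)) t := by
  refine (((hx.sub_const xT).mul hθ.cos).add ((hy.sub_const yT).mul hθ.sin)).congr_deriv ?_
  simp only [eby]
  linear_combination v * cos_sq_add_sin_sq (θ t)

theorem hasDerivAt_eby (hx : HasDerivAt x (v * cos (θ t)) t) (hy : HasDerivAt y (v * sin (θ t)) t)
    (hθ : HasDerivAt θ ω t) :
    HasDerivAt (eby x y θ xT yT d) (-(ω * ebx x y θ xT yT t)) t := by
  refine ((((hx.sub_const xT).neg.mul hθ.sin).add ((hy.sub_const yT).mul hθ.cos)).add_const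
    d).congr_deriv ?_
  simp only [ebx, Pi.neg_apply]
  ring

theorem hasDerivAt_rng (hx : HasDerivAt x (v * cos (θ t)) t)
    (hy : HasDerivAt y (v * sin (θ t)) t) (hr : rng x y xT yT t ≠ 0) :
    HasDerivAt (rng x y xT yT) (v * ebx x y θ xT yT t / rng x y xT yT t) t := by
  have hq : (x t - xT) ^ 2 + (y t - yT) ^ 2 ≠ 0 := fun h => hr (by simp [rng, h])
  refine ((((hx.sub_const xT).pow 2).add ((hy.sub_const yT).pow 2)).sqrt hq).congr_deriv ?_
  simp only [ebx, rng, Pi.add_apply, Pi.pow_apply] at hr ⊢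
  field_simp
  ring

theorem hasDerivAt_half_sq_ebx_add_sq_eby (hx : HasDerivAt x (v * cos (θ t)) t)
    (hy : HasDerivAt y (v * sin (θ t)) t) (hθ : HasDerivAt θ ω t) :
    HasDerivAt (fun s => 1 / 2 * (ebx x y θ xT yT s ^ 2 + eby x y θ xT yT d s ^ 2))
      (ebx x y θ xT yT t * (v - d * ω)) t := by
  refine ((((hasDerivAt_ebx (d := d) hx hy hθ).pow 2).add
    ((hasDerivAt_eby hx hy hθ).pow 2)).const_mul (1 / 2 : ℝ)).congr_deriv ?_
  ring

theorem hasDerivAt_beta {r' : ℝ} (hz : HasDerivAt z (-κ * z t + 1 / 2 * rng x y xT yT t ^ 2) t)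
    (hr : HasDerivAt (rng x y xT yT) r' t) :
    HasDerivAt (beta x y z κ xT yT) (-κ * beta x y z κ xT yT t + rng x y xT yT t * r') t := by
  refine ((hz.const_mul (-κ)).add ((hr.pow 2).const_mul (1 / 2 : ℝ))).congr_deriv ?_
  simp only [beta]
  ring

end Kinematics

theorem continuousAt_rng {x y : ℝ → ℝ} {xT yT t : ℝ} (hx : ContinuousAt x t)
    (hy : ContinuousAt y t) : ContinuousAt (rng x y xT yT) t := by
  unfold rng
  fun_prop

theorem abs_bounds_of_eq {κ z r β a b B : ℝ} (hκ : 0 < κ) (ha : 0 ≤ a) (hr : r ∈ Icc a b)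
    (hβ : |β| ≤ B) (hz : β = -κ * z + 1 / 2 * r ^ 2) :
    1 / κ * (1 / 2 * a ^ 2 - B) ≤ |z| ∧ |z| ≤ 1 / κ * (1 / 2 * b ^ 2 + B) := by
  have hz' : |z| = 1 / κ * |1 / 2 * r ^ 2 - β| := by
    rw [← abs_of_pos (one_div_pos.2 hκ), ← abs_mul, hz]
    congr 1
    field_simp
    ring
  have hβ' := abs_le.1 hβ
  have hra := pow_le_pow_left₀ ha hr.1 2
  have hrb := pow_le_pow_left₀ (ha.trans hr.1) hr.2 2
  rw [hz']
  constructor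
  · gcongr
    linarith [le_abs_self (1 / 2 * r ^ 2 - β)]
  · gcongr
    calc |1 / 2 * r ^ 2 - β| ≤ |1 / 2 * r ^ 2| + |β| := abs_sub _ _
      _ ≤ 1 / 2 * b ^ 2 + B := by rw [abs_of_nonneg (by positivity)]; linarith

section ClosedLoop

variable (x y θ z Ω : ℝ → ℝ) (v d k1 k2 κ ri ro xT yT : ℝ)

noncomputable def turnRate (t : ℝ) : ℝ :=
  v / d + v * k1 * Ω (beta x y z κ xT yT t) +
    v * k2 * ((rng x y xT yT t - d) / rng x y xT yT t) *
      eta (d - ri) (ro - d) (rng x y xT yT t - d)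

def IsClosedLoopAt (t : ℝ) : Prop :=
  HasDerivAt x (v * cos (θ t)) t ∧ HasDerivAt y (v * sin (θ t)) t ∧
    HasDerivAt z (-κ * z t + 1 / 2 * rng x y xT yT t ^ 2) t ∧
    HasDerivAt θ (turnRate x y z Ω v d k1 k2 κ ri ro xT yT t) t

noncomputable def lyapunovV2 (t : ℝ) : ℝ :=
  1 / 2 * (ebx x y θ xT yT t ^ 2 + eby x y θ xT yT d t ^ 2) +
    d * k2 * Vr (d - ri) (ro - d) (rng x y xT yT t - d) +
    d * k1 * ∫ τ in (0 : ℝ)..beta x y z κ xT yT t, Ω τ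

variable {x y θ z Ω v d k1 k2 κ ri ro xT yT}

theorem hasDerivAt_lyapunovV2 (hΩ : Continuous Ω) (hri : 0 < ri) (hrid : ri < d)
    (hdro : d < ro) {t : ℝ} (hcl : IsClosedLoopAt x y θ z Ω v d k1 k2 κ ri ro xT yT t)
    (hr : rng x y xT yT t ∈ Ioo ri ro) :
    HasDerivAt (lyapunovV2 x y θ z Ω d k1 k2 κ ri ro xT yT)
      (-(d * k1 * κ) * (beta x y z κ xT yT t * Ω (beta x y z κ xT yT t))) t := by
  obtain ⟨hx, hy, hz, hθ⟩ := hcl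
  have hd : d ≠ 0 := (hri.trans hrid).ne'
  have hr_ne : rng x y xT yT t ≠ 0 := (hri.trans hr.1).ne'
  have hrng := hasDerivAt_rng hx hy hr_ne
  have hVr := (hasDerivAt_Vr (sub_pos.2 hrid) (sub_pos.2 hdro) (by linarith [hr.1])
    (by linarith [hr.2])).comp t (hrng.sub_const d)
  have hF := (hΩ.integral_hasStrictDerivAt 0 _).hasDerivAt.comp t (hasDerivAt_beta hz hrng)
  refine (((hasDerivAt_half_sq_ebx_add_sq_eby hx hy hθ).add (hVr.const_mul (d * k2))).add
    (hF.const_mul (d * k1))).congr_deriv ?_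
  simp only [turnRate, beta]
  field_simp
  ring

end ClosedLoop

section Lyapunov

variable {x y θ z Ω : ℝ → ℝ} {v d k1 k2 κ ri ro xT yT : ℝ}

theorem lyapunovV2_le_lyapunovV2_zero (hΩ : Continuous Ω) (hΩpos : ∀ s, s ≠ 0 → 0 < s * Ω s)
    (hri : 0 < ri) (hrid : ri < d) (hdro : d < ro) (hk1 : 0 ≤ k1) (hκ : 0 ≤ κ) {b : ℝ}
    (hb : 0 ≤ b) (hcl : ∀ u ∈ Icc 0 b, IsClosedLoopAt x y θ z Ω v d k1 k2 κ ri ro xT yT u)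
    (htube : ∀ u ∈ Icc 0 b, rng x y xT yT u ∈ Ioo ri ro) :
    lyapunovV2 x y θ z Ω d k1 k2 κ ri ro xT yT b ≤
      lyapunovV2 x y θ z Ω d k1 k2 κ ri ro xT yT 0 := by
  have hder u (hu : u ∈ Icc 0 b) :=
    hasDerivAt_lyapunovV2 hΩ hri hrid hdro (hcl u hu) (htube u hu)
  have hsign (s : ℝ) : 0 ≤ s * Ω s := by
    rcases eq_or_ne s 0 with rfl | hs
    · simp
    · exact (hΩpos s hs).le
  have hanti := antitoneOn_of_hasDerivWithinAt_nonpos (convex_Icc 0 b)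
    (fun u hu => (hder u hu).continuousAt.continuousWithinAt)
    (fun u hu => (hder u (interior_subset hu)).hasDerivWithinAt)
    (fun u _ => mul_nonpos_of_nonpos_of_nonneg
      (neg_nonpos.2 (by have := (hri.trans hrid).le; positivity)) (hsign _))
  exact hanti (left_mem_Icc.2 hb) (right_mem_Icc.2 hb) hb

theorem Vr_le_and_integral_le_of_lyapunovV2_le (hF : ∀ s, 0 ≤ ∫ τ in (0 : ℝ)..s, Ω τ)
    (hd : 0 ≤ d) (hk1 : 0 ≤ k1) (hk2 : 0 ≤ k2) {t c : ℝ}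
    (hr : rng x y xT yT t ∈ Ioo ri ro) (hV : lyapunovV2 x y θ z Ω d k1 k2 κ ri ro xT yT t ≤ c) :
    d * k2 * Vr (d - ri) (ro - d) (rng x y xT yT t - d) ≤ c ∧
      d * k1 * ∫ τ in (0 : ℝ)..beta x y z κ xT yT t, Ω τ ≤ c := by
  have hVr := Vr_nonneg (by linarith [hr.1] : -(d - ri) < rng x y xT yT t - d)
    (by linarith [hr.2] : rng x y xT yT t - d < ro - d)
  have := mul_nonneg (mul_nonneg hd hk2) hVr
  have := mul_nonneg (mul_nonneg hd hk1) (hF (beta x y z κ xT yT t))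
  have := add_nonneg (sq_nonneg (ebx x y θ xT yT t)) (sq_nonneg (eby x y θ xT yT d t))
  unfold lyapunovV2 at hV
  constructor <;> linarith

theorem rng_mem_Icc_of_lyapunovV2_le (hF : ∀ s, 0 ≤ ∫ τ in (0 : ℝ)..s, Ω τ)
    (hd : 0 < d) (hrid : ri < d) (hdro : d < ro) (hk1 : 0 ≤ k1) (hk2 : 0 < k2) {t c : ℝ}
    (hr : rng x y xT yT t ∈ Ioo ri ro) (hV : lyapunovV2 x y θ z Ω d k1 k2 κ ri ro xT yT t ≤ c) :
    rng x y xT yT t ∈ Icc (ri + (d - ri) * (1 - √(1 - exp (-(2 * c) / (d * k2)))))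
      (ro - (ro - d) * (1 - √(1 - exp (-(2 * c) / (d * k2))))) := by
  have hVr : Vr (d - ri) (ro - d) (rng x y xT yT t - d) ≤ c / (d * k2) := by
    rw [le_div_iff₀ (mul_pos hd hk2), mul_comm]
    exact (Vr_le_and_integral_le_of_lyapunovV2_le hF hd.le hk1 hk2.le hr hV).1
  have h := mem_Icc_of_Vr_le (sub_pos.2 hrid) (sub_pos.2 hdro) (by linarith [hr.1])
    (by linarith [hr.2]) hVr
  rw [show -(2 * (c / (d * k2))) = -(2 * c) / (d * k2) by ring] at h
  constructor <;> linarith [h.1, h.2]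

theorem abs_beta_le_of_lyapunovV2_le {α₁ : ℝ → ℝ} (hα₁mono : StrictMonoOn α₁ (Ici 0))
    (hα₁le : ∀ s, α₁ |s| ≤ ∫ τ in (0 : ℝ)..s, Ω τ) (hF : ∀ s, 0 ≤ ∫ τ in (0 : ℝ)..s, Ω τ)
    (hd : 0 < d) (hk1 : 0 < k1) (hk2 : 0 ≤ k2) {t c B : ℝ}
    (hB : 0 ≤ B) (hαB : c / (d * k1) ≤ α₁ B) (hr : rng x y xT yT t ∈ Ioo ri ro)
    (hV : lyapunovV2 x y θ z Ω d k1 k2 κ ri ro xT yT t ≤ c) :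
    |beta x y z κ xT yT t| ≤ B := by
  have hF_le : ∫ τ in (0 : ℝ)..beta x y z κ xT yT t, Ω τ ≤ c / (d * k1) := by
    rw [le_div_iff₀ (mul_pos hd hk1), mul_comm]
    exact (Vr_le_and_integral_le_of_lyapunovV2_le hF hd.le hk1.le hk2 hr hV).2
  exact (hα₁mono.le_iff_le (mem_Ici.2 (abs_nonneg _)) (mem_Ici.2 hB)).1
    ((hα₁le _).trans (hF_le.trans hαB))

end Lyapunov

theorem theorem4d_z_bound_general
    (x y θ z : ℝ → ℝ) (Ω α₁ : ℝ → ℝ) (v d k1 k2 κ ri ro xT yT : ℝ)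
    (hΩcont : Continuous Ω) (hΩpos : ∀ s : ℝ, s ≠ 0 → 0 < s * Ω s)
    (hα₁mono : StrictMonoOn α₁ (Set.Ici 0))
    (hα₁0 : α₁ 0 = 0)
    (hα₁le : ∀ s : ℝ, α₁ |s| ≤ ∫ τ in (0 : ℝ)..s, Ω τ)
    (hri : 0 < ri) (hrid : ri < d) (hdro : d < ro)
    (hk1 : 0 < k1) (hk2 : 0 < k2) (hκ : 0 < κ)
    (hxdiff : ∀ t ≥ (0 : ℝ), DifferentiableAt ℝ x t)
    (hydiff : ∀ t ≥ (0 : ℝ), DifferentiableAt ℝ y t)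
    (hclosedloop : ∀ t ≥ (0 : ℝ), rng x y xT yT t ∈ Set.Ioo ri ro →
      HasDerivAt x (v * Real.cos (θ t)) t ∧
      HasDerivAt y (v * Real.sin (θ t)) t ∧
      HasDerivAt z (-κ * z t + (1 / 2) * (rng x y xT yT t) ^ 2) t ∧
      HasDerivAt θ (v / d + v * k1 * Ω (beta x y z κ xT yT t) +
        v * k2 * ((rng x y xT yT t - d) / rng x y xT yT t) *
          eta (d - ri) (ro - d) (rng x y xT yT t - d)) t)
    (hr0 : rng x y xT yT 0 ∈ Set.Ioo ri ro)
    (V20 Υ₂ B : ℝ)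
    (hV20 : V20 = (1 / 2) * ((ebx x y θ xT yT 0) ^ 2 + (eby x y θ xT yT d 0) ^ 2) +
      d * k2 * Vr (d - ri) (ro - d) (rng x y xT yT 0 - d) +
      d * k1 * ∫ τ in (0 : ℝ)..(beta x y z κ xT yT 0), Ω τ)
    (hΥ₂ : Υ₂ = Real.sqrt (1 - Real.exp (-(2 * V20) / (d * k2))))
    (hB : 0 ≤ B) (hαB : V20 / (d * k1) ≤ α₁ B) :
    ∀ t ≥ (0 : ℝ),
      (1 / κ) * ((1 / 2) * (ri + (d - ri) * (1 - Υ₂)) ^ 2 - B) ≤ |z t| ∧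
      |z t| ≤ (1 / κ) * ((1 / 2) * (ro - (ro - d) * (1 - Υ₂)) ^ 2 + B) := by
  intro t ht
  have hd : 0 < d := hri.trans hrid
  have hF (s : ℝ) : 0 ≤ ∫ τ in (0 : ℝ)..s, Ω τ :=
    (hα₁0.symm.trans_le (hα₁mono.monotoneOn self_mem_Ici (mem_Ici.2 (abs_nonneg s))
      (abs_nonneg s))).trans (hα₁le s)
  have hdecay : ∀ b ≥ 0, (∀ u ∈ Icc 0 b, rng x y xT yT u ∈ Ioo ri ro) →
      lyapunovV2 x y θ z Ω d k1 k2 κ ri ro xT yT b ≤ V20 := fun b hb htube =>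
    hV20 ▸ lyapunovV2_le_lyapunovV2_zero hΩcont hΩpos hri hrid hdro hk1.le hκ.le hb
      (fun u hu => hclosedloop u hu.1 (htube u hu)) htube
  have hΥ₂_lt : Υ₂ < 1 := hΥ₂ ▸ sqrt_one_sub_exp_lt_one _
  have hband : Icc 0 t ⊆ rng x y xT yT ⁻¹'
      Icc (ri + (d - ri) * (1 - Υ₂)) (ro - (ro - d) * (1 - Υ₂)) :=
    ContinuousOn.Icc_subset_preimage_of_trapped
      (fun u hu => (continuousAt_rng (hxdiff u hu.1).continuousAt
        (hydiff u hu.1).continuousAt).continuousWithinAt)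
      isClosed_Icc isOpen_Ioo (Icc_subset_Ioo (by nlinarith) (by nlinarith)) hr0
      fun u hu hin => hΥ₂ ▸ rng_mem_Icc_of_lyapunovV2_le hF hd hrid hdro hk1.le hk2
        (hin u (right_mem_Icc.2 hu.1)) (hdecay u hu.1 hin)
  have htube (u : ℝ) (hu : u ∈ Icc 0 t) : rng x y xT yT u ∈ Ioo ri ro :=
    Icc_subset_Ioo (by nlinarith) (by nlinarith) (hband hu)
  have hβ := abs_beta_le_of_lyapunovV2_le hα₁mono hα₁le hF hd hk1 hk2.le hB hαB
    (htube t (right_mem_Icc.2 ht)) (hdecay t ht htube)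
  exact abs_bounds_of_eq hκ (by nlinarith) (hband (right_mem_Icc.2 ht)) hβ rfl

/-- Theorem 4(d): Under the hypotheses of Theorem 2, if α₁ is a strictly
increasing continuous class-K function with α₁(|s|) ≤ ∫₀ˢ Ω(τ) dτ for all s, and B ≥ 0
satisfies α₁(B) ≥ V₂(0)/(d·k₁), then with Υ₂ = √(1 − exp(−2·V₂(0)/(d·k₂))), for all t ≥ 0:
(1/κ)·((1/2)·(r_i + δ_a·(1 − Υ₂))² − B) ≤ |z(t)| ≤ (1/κ)·((1/2)·(r_o − δ_b·(1 − Υ₂))² + B). -/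
theorem theorem4d_z_bound
    (x y θ z : ℝ → ℝ) (Ω α₁ : ℝ → ℝ) (v d k1 k2 κ ri ro xT yT : ℝ)
    (hΩcont : Continuous Ω) (hΩ0 : Ω 0 = 0) (hΩpos : ∀ s : ℝ, s ≠ 0 → 0 < s * Ω s)
    (hα₁mono : StrictMonoOn α₁ (Set.Ici 0)) (hα₁cont : ContinuousOn α₁ (Set.Ici 0))
    (hα₁0 : α₁ 0 = 0)
    (hα₁le : ∀ s : ℝ, α₁ |s| ≤ ∫ τ in (0 : ℝ)..s, Ω τ)
    (hv : v ≠ 0) (hri : 0 < ri) (hrid : ri < d) (hdro : d < ro)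
    (hk1 : 0 < k1) (hk2 : 0 < k2) (hκ : 0 < κ)
    (hxdiff : ∀ t ≥ (0 : ℝ), DifferentiableAt ℝ x t)
    (hydiff : ∀ t ≥ (0 : ℝ), DifferentiableAt ℝ y t)
    (hθdiff : ∀ t ≥ (0 : ℝ), DifferentiableAt ℝ θ t)
    (hzdiff : ∀ t ≥ (0 : ℝ), DifferentiableAt ℝ z t)
    (hclosedloop : ∀ t ≥ (0 : ℝ), rng x y xT yT t ∈ Set.Ioo ri ro →
      HasDerivAt x (v * Real.cos (θ t)) t ∧
      HasDerivAt y (v * Real.sin (θ t)) t ∧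
      HasDerivAt z (-κ * z t + (1 / 2) * (rng x y xT yT t) ^ 2) t ∧
      HasDerivAt θ (v / d + v * k1 * Ω (beta x y z κ xT yT t) +
        v * k2 * ((rng x y xT yT t - d) / rng x y xT yT t) *
          eta (d - ri) (ro - d) (rng x y xT yT t - d)) t)
    (hr0 : rng x y xT yT 0 ∈ Set.Ioo ri ro)
    (V20 Υ₂ B : ℝ)
    (hV20 : V20 = (1 / 2) * ((ebx x y θ xT yT 0) ^ 2 + (eby x y θ xT yT d 0) ^ 2) +
      d * k2 * Vr (d - ri) (ro - d) (rng x y xT yT 0 - d) +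
      d * k1 * ∫ τ in (0 : ℝ)..(beta x y z κ xT yT 0), Ω τ)
    (hΥ₂ : Υ₂ = Real.sqrt (1 - Real.exp (-(2 * V20) / (d * k2))))
    (hB : 0 ≤ B) (hαB : V20 / (d * k1) ≤ α₁ B) :
    ∀ t ≥ (0 : ℝ),
      (1 / κ) * ((1 / 2) * (ri + (d - ri) * (1 - Υ₂)) ^ 2 - B) ≤ |z t| ∧
      |z t| ≤ (1 / κ) * ((1 / 2) * (ro - (ro - d) * (1 - Υ₂)) ^ 2 + B) :=
  theorem4d_z_bound_general x y θ z Ω α₁ v d k1 k2 κ ri ro xT yT hΩcont hΩpos hα₁mono hα₁0 hα₁le hri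
    hrid hdro hk1 hk2 hκ hxdiff hydiff hclosedloop hr0 V20 Υ₂ B hV20 hΥ₂ hB hαB
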